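/- arXiv:1704.04652 — 2 statements merged into one kernel-verified Lean document; each statement's English description precedes it below -/
import Mathlib

section
/- Let fᵢ : ℝ^m → ℝ (i = 1, …, N) be differentiable strictly convex functions and L the Laplacian of a connected weighted undirected graph. Any equilibrium point (z*, λ*) of the primal-dual dynamics ż = -∇f(z) - (L ⊗ I_m)λ, λ̇ = (L ⊗ I_m)z (where z = col(z₁,…,z_N) and ∇f(z) = col(∇f₁(z₁),…,∇f_N(z_N))) satisfies z₁* = ⋯ = z_N* = θ with Σᵢ₌₁ᴺ ∇fᵢ(θ) = 0; that is, θ is an optimal solution of min_y Σᵢ fᵢ(y). -/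
/-!
Writing the Laplacian action as `(L x)ᵢ = ∑ⱼ Aᵢⱼ (xᵢ - xⱼ)`, the identity
`∑ᵢⱼ Aᵢⱼ ‖zᵢ - zⱼ‖² = 2 ⟪z, (L ⊗ I) z⟫ = 0` and nonnegativity of the weights force `zᵢ = zⱼ`
along every edge, so `z*` is constant on the connected graph. Summing the first equilibrium
equation over `i` kills the dual term, because `∑ᵢⱼ Aᵢⱼ (λᵢ - λⱼ) = 0` for symmetric `A`;
hence `∑ᵢ ∇fᵢ(θ) = 0`, and summing the first-order convexity inequalities of the `fᵢ` shows
that `θ` minimizes `∑ᵢ fᵢ`.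
-/

open Finset Matrix

/-- The simple graph on `Fin N` whose edges are the pairs with positive weight. -/
def weightGraph {N : ℕ} (A : Matrix (Fin N) (Fin N) ℝ)
    (hsymm : ∀ i j, A i j = A j i) : SimpleGraph (Fin N) where
  Adj i j := i ≠ j ∧ 0 < A i j
  symm := ⟨fun i j h => ⟨h.1.symm, (hsymm i j) ▸ h.2⟩⟩
  loopless := ⟨fun i h => h.1 rfl⟩

theorem ConvexOn.add_fderiv_sub_le {E : Type*} [NormedAddCommGroup E] [NormedSpace ℝ E]
    {s : Set E} {g : E → ℝ} {x y : E} (hg : ConvexOn ℝ s g) (hx : x ∈ s) (hy : y ∈ s)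
    (hd : DifferentiableAt ℝ g x) : g x + fderiv ℝ g x (y - x) ≤ g y := by
  have hd' : HasFDerivAt g (fderiv ℝ g x) (AffineMap.lineMap x y (0 : ℝ)) := by
    simpa using hd.hasFDerivAt
  have hslope := le_slope_of_hasDerivWithinAt_Ioi (hg.comp_affineMap (AffineMap.lineMap x y))
    (by simpa using hx) (by simpa using hy) one_pos
    (hd'.comp_hasDerivAt 0 AffineMap.hasDerivAt_lineMap).hasDerivWithinAt
  simp only [slope_def_field, Function.comp_apply, AffineMap.lineMap_apply_zero,
    AffineMap.lineMap_apply_one, sub_zero, div_one] at hslope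
  linarith

theorem SimpleGraph.Reachable.eq_of_forall_adj_eq {V α : Type*} {G : SimpleGraph V}
    {x : V → α} (hx : ∀ u v, G.Adj u v → x u = x v) {u v : V} (h : G.Reachable u v) :
    x u = x v := by
  obtain ⟨w⟩ := h
  induction w with
  | nil => rfl
  | cons hadj _ ih => exact (hx _ _ hadj).trans ih

section WeightedLaplacian

variable {ι : Type*} [Fintype ι] {A : Matrix ι ι ℝ}

theorem sum_laplacian_smul [DecidableEq ι] {M : Type*} [AddCommGroup M] [Module ℝ M]
    {L : Matrix ι ι ℝ} (hLdiag : ∀ i, L i i = ∑ j ∈ univ.erase i, A i j)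
    (hLoff : ∀ i j, i ≠ j → L i j = -A i j) (x : ι → M) (i : ι) :
    ∑ j, L i j • x j = ∑ j, A i j • (x i - x j) := by
  rw [← add_sum_erase _ _ (mem_univ i), ← add_sum_erase _ _ (mem_univ i), sub_self, smul_zero,
    zero_add, hLdiag, sum_smul, ← sum_add_distrib]
  refine sum_congr rfl fun j hj => ?_
  rw [hLoff i j (ne_of_mem_erase hj).symm, smul_sub, neg_smul, sub_eq_add_neg]

theorem sum_sum_smul_eq_zero_of_antisymm {M : Type*} [AddCommGroup M] [Module ℝ M]
    (hA : ∀ i j, A i j = A j i) {g : ι → ι → M} (hg : ∀ i j, g j i = -g i j) :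
    ∑ i, ∑ j, A i j • g i j = 0 := by
  set S := ∑ i, ∑ j, A i j • g i j
  have hS : S = -S :=
    calc S = ∑ i, ∑ j, A j i • g j i := sum_comm
      _ = -S := by simp only [S, ← sum_neg_distrib, ← smul_neg, ← hg, hA]
  calc S = (2 : ℝ)⁻¹ • (S + S) := by module
    _ = 0 := by nth_rw 2 [hS]; rw [add_neg_cancel, smul_zero]

variable {E : Type*} [NormedAddCommGroup E] [InnerProductSpace ℝ E]

theorem sum_sum_mul_norm_sub_sq (hA : ∀ i j, A i j = A j i) (x : ι → E) :
    ∑ i, ∑ j, A i j * ‖x i - x j‖ ^ 2 = 2 * ∑ i, inner ℝ (x i) (∑ j, A i j • (x i - x j)) := by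
  -- `‖xᵢ - xⱼ‖² + ⟪xᵢ + xⱼ, xᵢ - xⱼ⟫ = 2 ⟪xᵢ, xᵢ - xⱼ⟫`, and the second term is antisymmetric
  have hanti := sum_sum_smul_eq_zero_of_antisymm hA
    (g := fun i j => inner ℝ (x i + x j) (x i - x j)) fun i j => by
      rw [add_comm, ← neg_sub, inner_neg_right]
  simp only [smul_eq_mul] at hanti
  rw [← add_zero (∑ i, ∑ j, _), ← hanti, ← sum_add_distrib, mul_sum]
  refine sum_congr rfl fun i _ => ?_
  rw [← sum_add_distrib, inner_sum, mul_sum]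
  refine sum_congr rfl fun j _ => ?_
  rw [real_inner_smul_right, ← real_inner_self_eq_norm_sq, inner_add_left, inner_sub_left]
  ring

theorem eq_of_sum_smul_sub_eq_zero (hA : ∀ i j, A i j = A j i) (hA₀ : ∀ i j, 0 ≤ A i j)
    {x : ι → E} (hx : ∀ i, ∑ j, A i j • (x i - x j) = 0) {i j : ι} (hij : 0 < A i j) :
    x i = x j := by
  have hnn : ∀ i j, 0 ≤ A i j * ‖x i - x j‖ ^ 2 := fun i j => mul_nonneg (hA₀ i j) (sq_nonneg _)
  have hsum : ∑ i, ∑ j, A i j * ‖x i - x j‖ ^ 2 = 0 := by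
    simp [sum_sum_mul_norm_sub_sq hA, hx]
  have hrow := (Fintype.sum_eq_zero_iff_of_nonneg fun i => sum_nonneg fun j _ => hnn i j).mp hsum
  have hterm := (Fintype.sum_eq_zero_iff_of_nonneg (hnn i)).mp (congrFun hrow i)
  rcases mul_eq_zero.mp (congrFun hterm j) with h | h
  · exact absurd h hij.ne'
  · exact sub_eq_zero.mp (norm_eq_zero.mp (pow_eq_zero_iff two_ne_zero |>.mp h))

end WeightedLaplacian

theorem stmt8_general {N m : ℕ}
    (A L : Matrix (Fin N) (Fin N) ℝ)
    (hAsymm : ∀ i j, A i j = A j i)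
    (hAnonneg : ∀ i j, 0 ≤ A i j)
    (hLdiag : ∀ i, L i i = ∑ j ∈ univ.erase i, A i j)
    (hLoff : ∀ i j, i ≠ j → L i j = -A i j)
    (hconn : (weightGraph A hAsymm).Connected)
    (f : Fin N → EuclideanSpace ℝ (Fin m) → ℝ)
    (hdiff : ∀ i, Differentiable ℝ (f i))
    (hstrict : ∀ i, StrictConvexOn ℝ Set.univ (f i))
    (zstar lamstar : Fin N → EuclideanSpace ℝ (Fin m))
    (heq₁ : ∀ i, -gradient (f i) (zstar i) - ∑ j, L i j • lamstar j = 0)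
    (heq₂ : ∀ i, (∑ j, L i j • zstar j) = (0 : EuclideanSpace ℝ (Fin m))) :
    ∃ θ : EuclideanSpace ℝ (Fin m), (∀ i, zstar i = θ) ∧
      (∑ i, gradient (f i) θ) = 0 ∧
      ∀ y : EuclideanSpace ℝ (Fin m), (∑ i, f i θ) ≤ ∑ i, f i y := by
  have hLap := sum_laplacian_smul (M := EuclideanSpace ℝ (Fin m)) hLdiag hLoff
  have hedge : ∀ i j, (weightGraph A hAsymm).Adj i j → zstar i = zstar j := fun i j hij =>
    eq_of_sum_smul_sub_eq_zero hAsymm hAnonneg (fun k => hLap zstar k ▸ heq₂ k) hij.2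
  obtain ⟨i₀⟩ := hconn.nonempty
  have hconst : ∀ i, zstar i = zstar i₀ := fun i =>
    (hconn.preconnected i i₀).eq_of_forall_adj_eq hedge
  have hgrad : ∑ i, gradient (f i) (zstar i₀) = 0 := by
    calc ∑ i, gradient (f i) (zstar i₀)
        = -∑ i, ∑ j, A i j • (lamstar i - lamstar j) := by
          rw [← sum_neg_distrib]
          refine sum_congr rfl fun i _ => ?_
          rw [← hconst i, ← hLap]
          exact neg_eq_iff_eq_neg.mp (sub_eq_zero.mp (heq₁ i))
      _ = 0 := by
          rw [sum_sum_smul_eq_zero_of_antisymm hAsymm fun i j => (neg_sub _ _).symm, neg_zero]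
  refine ⟨zstar i₀, hconst, hgrad, fun y => ?_⟩
  calc ∑ i, f i (zstar i₀)
      = ∑ i, (f i (zstar i₀) + fderiv ℝ (f i) (zstar i₀) (y - zstar i₀)) := by
        simp only [sum_add_distrib, ← inner_gradient_left, ← sum_inner, hgrad, inner_zero_left,
          add_zero]
    _ ≤ ∑ i, f i y := sum_le_sum fun i _ =>
        (hstrict i).convexOn.add_fderiv_sub_le trivial trivial (hdiff i _)

/-- Any equilibrium point `(z*, λ*)` of the primal-dual dynamics
`ż = -∇f(z) - (L ⊗ I_m)λ`, `λ̇ = (L ⊗ I_m)z` with `L` the Laplacian of a connected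
weighted undirected graph and each `fᵢ` differentiable and strictly convex satisfies
`z₁* = ⋯ = z_N* = θ` with `∑ᵢ ∇fᵢ(θ) = 0`, i.e. `θ` minimizes `∑ᵢ fᵢ`. -/
theorem stmt8 {N m : ℕ}
    (A L : Matrix (Fin N) (Fin N) ℝ)
    (hAdiag : ∀ i, A i i = 0)
    (hAsymm : ∀ i j, A i j = A j i)
    (hAnonneg : ∀ i j, 0 ≤ A i j)
    (hLdiag : ∀ i, L i i = ∑ j ∈ univ.erase i, A i j)
    (hLoff : ∀ i j, i ≠ j → L i j = -A i j)
    (hconn : (weightGraph A hAsymm).Connected)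
    (f : Fin N → EuclideanSpace ℝ (Fin m) → ℝ)
    (hdiff : ∀ i, Differentiable ℝ (f i))
    (hstrict : ∀ i, StrictConvexOn ℝ Set.univ (f i))
    (zstar lamstar : Fin N → EuclideanSpace ℝ (Fin m))
    (heq₁ : ∀ i, -gradient (f i) (zstar i) - ∑ j, L i j • lamstar j = 0)
    (heq₂ : ∀ i, (∑ j, L i j • zstar j) = (0 : EuclideanSpace ℝ (Fin m))) :
    ∃ θ : EuclideanSpace ℝ (Fin m), (∀ i, zstar i = θ) ∧
      (∑ i, gradient (f i) θ) = 0 ∧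
      ∀ y : EuclideanSpace ℝ (Fin m), (∑ i, f i θ) ≤ ∑ i, f i y :=
  stmt8_general A L hAsymm hAnonneg hLdiag hLoff hconn f hdiff hstrict zstar lamstar heq₁ heq₂
end

section
/- Suppose x : [0, ∞) → ℝⁿ and z : [0, ∞) → ℝˡ are differentiable, V(t) = ‖x(t)‖² + ‖z(t)‖² satisfies V̇(t) ≤ -ω‖x(t)‖² for all t, and there exist δ, k > 0 such that ∫_t^{t+δ} ‖x(τ)‖² dτ ≥ k(‖x(t)‖² + ‖z(t)‖²) for all t ≥ 0 (uniform complete observability bound). Then V(t + δ) - V(t) ≤ -ωk·(‖x(t)‖² + ‖z(t)‖²) · 2 / 2 = -2ωk·V(t)/2, i.e., V(t+δ) ≤ (1 - ωk)V(t) for all t ≥ 0, and hence V(t) → 0 exponentially (assuming ωk < 1). -/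
/-!
Integrating `V̇ ≤ -ω‖x‖²` over `[t, t + δ]` and inserting the observability bound gives
`V(t + δ) ≤ V(t) - ω ∫_t^{t+δ} ‖x‖² ≤ (1 - ωk) V(t)`. Iterating this on the grid `mδ` and
using that `V` is nonincreasing between grid points yields `V(t) ≤ (1 - ωk)^⌊t/δ⌋ V(0)`.
-/

open Set MeasureTheory intervalIntegral

section Lyapunov

variable {V W : ℝ → ℝ} {ω : ℝ}

theorem add_mul_integral_le_of_hasDerivAt_le {a b : ℝ} (hab : a ≤ b)
    (hW : IntegrableOn W (Icc a b)) (hV : ∀ t, ∃ V', HasDerivAt V V' t ∧ V' ≤ -ω * W t) :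
    V b + ω * ∫ t in a..b, W t ≤ V a := by
  choose V' hV' hle using hV
  have h := sub_le_integral_of_hasDeriv_right_of_le hab
    (fun t _ => (hV' t).continuousAt.continuousWithinAt) (fun t _ => (hV' t).hasDerivWithinAt)
    (hW.const_mul (-ω)) (fun t _ => hle t)
  rw [intervalIntegral.integral_const_mul] at h
  linarith

theorem antitone_of_hasDerivAt_le (hω : 0 ≤ ω) (hW : Continuous W) (hW₀ : ∀ t, 0 ≤ W t)
    (hV : ∀ t, ∃ V', HasDerivAt V V' t ∧ V' ≤ -ω * W t) : Antitone V := fun a b hab => by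
  have hdecay := add_mul_integral_le_of_hasDerivAt_le hab hW.integrableOn_Icc hV
  have hint : 0 ≤ ∫ t in a..b, W t := integral_nonneg hab fun t _ => hW₀ t
  nlinarith

end Lyapunov

section Decay

variable {V : ℝ → ℝ} {c δ : ℝ}

theorem le_pow_mul_of_le_mul_add (hc : 0 ≤ c) (hδ : 0 ≤ δ)
    (hstep : ∀ t, 0 ≤ t → V (t + δ) ≤ c * V t) (m : ℕ) : V (m * δ) ≤ c ^ m * V 0 := by
  induction m with
  | zero => simp
  | succ m ih =>
    calc V ((m + 1 : ℕ) * δ) = V (m * δ + δ) := by push_cast; ring_nf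
      _ ≤ c * V (m * δ) := hstep _ (by positivity)
      _ ≤ c * (c ^ m * V 0) := mul_le_mul_of_nonneg_left ih hc
      _ = c ^ (m + 1) * V 0 := by ring

theorem le_pow_floor_mul_of_le_mul_add (hc : 0 ≤ c) (hδ : 0 < δ) (hV : AntitoneOn V (Ici 0))
    (hstep : ∀ t, 0 ≤ t → V (t + δ) ≤ c * V t) {t : ℝ} (ht : 0 ≤ t) :
    V t ≤ c ^ ⌊t / δ⌋₊ * V 0 :=
  calc V t ≤ V (⌊t / δ⌋₊ * δ) :=
        hV (mem_Ici.2 (by positivity)) (mem_Ici.2 ht)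
          ((le_div_iff₀ hδ).1 (Nat.floor_le (by positivity)))
    _ ≤ c ^ ⌊t / δ⌋₊ * V 0 := le_pow_mul_of_le_mul_add hc hδ.le hstep _

end Decay

theorem stmt14_general {n l : ℕ}
    (x : ℝ → EuclideanSpace ℝ (Fin n)) (z : ℝ → EuclideanSpace ℝ (Fin l))
    (hx : Differentiable ℝ x)
    (ω k δ : ℝ) (hω : 0 < ω) (hδ : 0 < δ) (hωk : ω * k < 1)
    (hVdot : ∀ t : ℝ, ∃ V' : ℝ,
      HasDerivAt (fun s => ‖x s‖ ^ 2 + ‖z s‖ ^ 2) V' t ∧ V' ≤ -ω * ‖x t‖ ^ 2)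
    (hobs : ∀ t : ℝ, 0 ≤ t →
      k * (‖x t‖ ^ 2 + ‖z t‖ ^ 2) ≤ ∫ τ in t..(t + δ), ‖x τ‖ ^ 2) :
    (∀ t : ℝ, 0 ≤ t →
      ‖x (t + δ)‖ ^ 2 + ‖z (t + δ)‖ ^ 2 ≤ (1 - ω * k) * (‖x t‖ ^ 2 + ‖z t‖ ^ 2)) ∧
    (∀ t : ℝ, 0 ≤ t →
      ‖x t‖ ^ 2 + ‖z t‖ ^ 2 ≤ (1 - ω * k) ^ (⌊t / δ⌋.toNat) * (‖x 0‖ ^ 2 + ‖z 0‖ ^ 2)) := by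
  have hW : Continuous fun τ => ‖x τ‖ ^ 2 := hx.continuous.norm.pow 2
  have hstep : ∀ t : ℝ, 0 ≤ t →
      ‖x (t + δ)‖ ^ 2 + ‖z (t + δ)‖ ^ 2 ≤ (1 - ω * k) * (‖x t‖ ^ 2 + ‖z t‖ ^ 2) := by
    intro t ht
    have hdecay := add_mul_integral_le_of_hasDerivAt_le (le_add_of_nonneg_right hδ.le : t ≤ t + δ)
      hW.integrableOn_Icc hVdot
    nlinarith [mul_le_mul_of_nonneg_left (hobs t ht) hω.le]
  refine ⟨hstep, fun t ht => ?_⟩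
  rw [Int.floor_toNat]
  exact le_pow_floor_mul_of_le_mul_add (by linarith) hδ
    ((antitone_of_hasDerivAt_le hω.le hW (fun _ => by positivity) hVdot).antitoneOn _) hstep ht

/-- If `V(t) = ‖x(t)‖² + ‖z(t)‖²` satisfies `V̇ ≤ -ω‖x‖²` and the uniform complete
observability bound `∫_t^{t+δ} ‖x(τ)‖² dτ ≥ k(‖x(t)‖² + ‖z(t)‖²)` holds, then
`V(t+δ) ≤ (1 - ωk)V(t)` for all `t ≥ 0`, and hence (with `ωk < 1`) `V` decays
exponentially: `V(t) ≤ (1 - ωk)^⌊t/δ⌋ V(0)`. -/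
theorem stmt14 {n l : ℕ}
    (x : ℝ → EuclideanSpace ℝ (Fin n)) (z : ℝ → EuclideanSpace ℝ (Fin l))
    (hx : Differentiable ℝ x) (hz : Differentiable ℝ z)
    (ω k δ : ℝ) (hω : 0 < ω) (hk : 0 < k) (hδ : 0 < δ) (hωk : ω * k < 1)
    (hVdot : ∀ t : ℝ, ∃ V' : ℝ,
      HasDerivAt (fun s => ‖x s‖ ^ 2 + ‖z s‖ ^ 2) V' t ∧ V' ≤ -ω * ‖x t‖ ^ 2)
    (hobs : ∀ t : ℝ, 0 ≤ t →
      k * (‖x t‖ ^ 2 + ‖z t‖ ^ 2) ≤ ∫ τ in t..(t + δ), ‖x τ‖ ^ 2) :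
    (∀ t : ℝ, 0 ≤ t →
      ‖x (t + δ)‖ ^ 2 + ‖z (t + δ)‖ ^ 2 ≤ (1 - ω * k) * (‖x t‖ ^ 2 + ‖z t‖ ^ 2)) ∧
    (∀ t : ℝ, 0 ≤ t →
      ‖x t‖ ^ 2 + ‖z t‖ ^ 2 ≤ (1 - ω * k) ^ (⌊t / δ⌋.toNat) * (‖x 0‖ ^ 2 + ‖z 0‖ ^ 2)) :=
  stmt14_general x z hx ω k δ hω hδ hωk hVdot hobs
end
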